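/- (Local existence for the nonlinear wave equation, commutative case θ = 0.) Let d ≥ 1, let p ≥ 2 be an integer, let u_0, u_1 ∈ L²(ℝ^d), let T > 0, let h : (0,T] → ℝ be measurable and positive with ∫_0^T h(s)² ds < ∞, and let A : L²(ℝ^d) → L^{2p}(ℝ^d) be a bounded linear operator. Then there exist T* ∈ (0,T] and a continuous function u : [0,T*] → L²(ℝ^d) such that for all t ∈ [0,T*], u(t) = u_0 + t·u_1 + ∫_0^t (t − s)·h(s)·|A u(s)|^p ds, the integral being a Bochner integral in L²(ℝ^d). -/

import Mathlib

/-!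
The map `F v = |A v|^p` is Lipschitz on bounded subsets of `L²`: pointwise
`||a|^p - |b|^p| ≤ p (|a| + |b|)^(p-1) |a - b|`, and Hölder's inequality with exponents
`2p/(p-1)` and `2p` turns this into an `L^{2p} → L²` estimate. The integral equation is a
fixed-point problem for the Duhamel map in `C([0, τ], L²)`. Since `h ∈ L²(0, T)` is integrable,
`∫₀^τ |h|` is small for small `τ`, so the Duhamel map sends a ball of radius
`R = ‖u₀‖ + T‖u₁‖ + 1` into itself and is a contraction there; Banach's fixed point theorem
gives the solution.
-/

open MeasureTheory ENNReal NNReal Set Filter Topology Metric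

theorem abs_abs_pow_sub_abs_pow_le (p : ℕ) (a b : ℝ) :
    |(|a| ^ p - |b| ^ p)| ≤ p * (|a| + |b|) ^ (p - 1) * |a - b| := by
  calc |(|a| ^ p - |b| ^ p)| ≤ |(|a| - |b|)| * p * max |(|a|)| |(|b|)| ^ (p - 1) :=
        abs_pow_sub_pow_le ..
    _ ≤ |a - b| * p * (|a| + |b|) ^ (p - 1) := by
        rw [abs_abs, abs_abs]
        gcongr ?_ * _ * ?_ ^ _
        · exact abs_abs_sub_abs_le_abs_sub a b
        · exact max_le_add_of_nonneg (abs_nonneg a) (abs_nonneg b)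
    _ = p * (|a| + |b|) ^ (p - 1) * |a - b| := by ring

theorem ENNReal.holderTriple_two_mul_div (p : ℕ) (hp : 1 ≤ p) :
    HolderTriple (2 * p / (p - 1 : ℕ)) (2 * p) 2 := by
  constructor
  have hp0 : (p : ℝ≥0∞) ≠ 0 := by positivity
  rw [ENNReal.inv_div (by simp) (Or.inr (by positivity)), ← one_div, ENNReal.div_add_div_same,
    ← Nat.cast_add_one, Nat.sub_add_cancel hp]
  simpa [one_div] using ENNReal.mul_div_mul_right 1 2 hp0 (by simp)

section AbsPow

variable {α : Type*} [MeasurableSpace α] {μ : Measure α} {p : ℕ}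

theorem eLpNorm_abs_pow_sub_abs_pow_le (hp : 2 ≤ p) {w v : α → ℝ}
    (hw : AEStronglyMeasurable w μ) (hv : AEStronglyMeasurable v μ) :
    eLpNorm (fun x => |w x| ^ p - |v x| ^ p) 2 μ ≤
      p * (eLpNorm w (2 * p) μ + eLpNorm v (2 * p) μ) ^ (p - 1) * eLpNorm (w - v) (2 * p) μ := by
  have := ENNReal.holderTriple_two_mul_div p (by omega)
  have hpos : (0 : ℝ) < (p - 1 : ℕ) := by exact_mod_cast (by omega : 0 < p - 1)
  set g : α → ℝ := fun x => |w x| + |v x|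
  set φ : α → ℝ := fun x => ‖g x‖ ^ ((p - 1 : ℕ) : ℝ)
  have hφ : AEStronglyMeasurable φ μ := by
    have hc : Continuous fun z : ℝ × ℝ => ‖|z.1| + |z.2|‖ ^ ((p - 1 : ℕ) : ℝ) :=
      by fun_prop (disch := positivity)
    exact hc.comp_aestronglyMeasurable (hw.prodMk hv)
  calc eLpNorm (fun x => |w x| ^ p - |v x| ^ p) 2 μ
      ≤ eLpNorm ((p : ℝ) • (φ • (w - v))) 2 μ := by
        refine eLpNorm_mono fun x => ?_
        calc ‖|w x| ^ p - |v x| ^ p‖ ≤ p * (|w x| + |v x|) ^ (p - 1) * |w x - v x| :=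
              abs_abs_pow_sub_abs_pow_le p (w x) (v x)
          _ = ‖((p : ℝ) • (φ • (w - v))) x‖ := by
              simp [φ, g, Real.rpow_natCast, mul_assoc,
                abs_of_nonneg (add_nonneg (abs_nonneg (w x)) (abs_nonneg (v x)))]
    _ ≤ p * (eLpNorm φ (2 * p / (p - 1 : ℕ)) μ * eLpNorm (w - v) (2 * p) μ) := by
        rw [eLpNorm_const_smul, Real.enorm_natCast]
        gcongr
        exact eLpNorm_smul_le_mul_eLpNorm (hw.sub hv) hφ
    _ = p * eLpNorm g (2 * p) μ ^ (p - 1) * eLpNorm (w - v) (2 * p) μ := by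
        rw [eLpNorm_norm_rpow g hpos, ofReal_natCast,
          ENNReal.div_mul_cancel (by exact_mod_cast hpos.ne') (by simp), ENNReal.rpow_natCast,
          mul_assoc]
    _ ≤ _ := by
        gcongr
        calc eLpNorm g (2 * p) μ
            ≤ eLpNorm (fun x => ‖w x‖) (2 * p) μ + eLpNorm (fun x => ‖v x‖) (2 * p) μ :=
              eLpNorm_add_le hw.norm hv.norm (by norm_cast; omega)
          _ = _ := by rw [eLpNorm_norm, eLpNorm_norm]

variable [Fact ((1 : ℝ≥0∞) ≤ 2 * p)]

theorem MeasureTheory.Lp.norm_sub_le_of_ae_eq_abs_pow (hp : 2 ≤ p) {w v : Lp ℝ (2 * p) μ}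
    {Nw Nv : Lp ℝ 2 μ}
    (hNw : Nw =ᵐ[μ] fun x => |w x| ^ p) (hNv : Nv =ᵐ[μ] fun x => |v x| ^ p) :
    ‖Nw - Nv‖ ≤ p * (‖w‖ + ‖v‖) ^ (p - 1) * ‖w - v‖ := by
  have hsub : ⇑(Nw - Nv) =ᵐ[μ] fun x => |w x| ^ p - |v x| ^ p := by
    filter_upwards [Lp.coeFn_sub Nw Nv, hNw, hNv] with x h h₁ h₂
    rw [h, Pi.sub_apply, h₁, h₂]
  have key : ‖Nw - Nv‖ₑ ≤ p * (‖w‖ₑ + ‖v‖ₑ) ^ (p - 1) * ‖w - v‖ₑ := by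
    simp only [Lp.enorm_def]
    rw [eLpNorm_congr_ae hsub, eLpNorm_congr_ae (Lp.coeFn_sub w v)]
    exact eLpNorm_abs_pow_sub_abs_pow_le hp (Lp.aestronglyMeasurable w) (Lp.aestronglyMeasurable v)
  simp only [← ofReal_norm, ← ENNReal.ofReal_natCast,
    ← ENNReal.ofReal_add (norm_nonneg _) (norm_nonneg _),
    ← ENNReal.ofReal_pow (add_nonneg (norm_nonneg _) (norm_nonneg _))] at key
  rwa [← ENNReal.ofReal_mul (by positivity), ← ENNReal.ofReal_mul (by positivity),
    ENNReal.ofReal_le_ofReal_iff (by positivity)] at key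

theorem MeasureTheory.Lp.lipschitzOnWith_of_ae_eq_abs_pow (hp : 2 ≤ p)
    {N : Lp ℝ (2 * p) μ → Lp ℝ 2 μ}
    (hN : ∀ w, N w =ᵐ[μ] fun x => |w x| ^ p) (ρ : ℝ≥0) :
    LipschitzOnWith (p * (2 * ρ) ^ (p - 1)) N (closedBall 0 ρ) := by
  refine LipschitzOnWith.of_dist_le_mul fun w hw v hv => ?_
  rw [mem_closedBall_zero_iff] at hw hv
  rw [_root_.dist_eq_norm, _root_.dist_eq_norm]
  refine (Lp.norm_sub_le_of_ae_eq_abs_pow hp (hN w) (hN v)).trans ?_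
  push_cast
  gcongr
  linarith

end AbsPow

theorem IntervalIntegrable.of_mem_Icc {E : Type*} [NormedAddCommGroup E] {f : ℝ → E} {τ t : ℝ}
    (hf : IntervalIntegrable f volume 0 τ) (ht : t ∈ Icc 0 τ) : IntervalIntegrable f volume 0 t :=
  hf.mono_set (uIcc_subset_uIcc_left (Icc_subset_uIcc ht))

section Duhamel

variable {E : Type*} [NormedAddCommGroup E] [NormedSpace ℝ E] {h : ℝ → ℝ} {g g' : ℝ → E}
  {τ t : ℝ}

/-- The solution of `u'' = h • g`, `u 0 = u₀`, `u' 0 = u₁`. -/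
noncomputable def duhamel (h : ℝ → ℝ) (u₀ u₁ : E) (g : ℝ → E) (t : ℝ) : E :=
  u₀ + t • u₁ + ∫ s in (0 : ℝ)..t, ((t - s) * h s) • g s

theorem intervalIntegrable_mul_smul (hh : IntervalIntegrable h volume 0 t) {c : ℝ → ℝ}
    (hc : Continuous c) (hg : Continuous g) :
    IntervalIntegrable (fun s => (c s * h s) • g s) volume 0 t :=
  (hh.continuousOn_mul hc.continuousOn).smul_continuousOn hg.continuousOn

theorem continuousOn_duhamel (hh : IntervalIntegrable h volume 0 τ) (hg : Continuous g)
    (u₀ u₁ : E) : ContinuousOn (duhamel h u₀ u₁ g) (Icc 0 τ) := by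
  have hprim : ∀ c : ℝ → ℝ, Continuous c →
      ContinuousOn (fun t => ∫ s in (0 : ℝ)..t, (c s * h s) • g s) (Icc 0 τ) := fun c hc =>
    (intervalIntegral.continuousOn_primitive_interval' (intervalIntegrable_mul_smul hh hc hg)
      left_mem_uIcc).mono Icc_subset_uIcc
  have hsplit : EqOn (fun t => u₀ + t • u₁ + ((t • ∫ s in (0 : ℝ)..t, (1 * h s) • g s) -
      ∫ s in (0 : ℝ)..t, (s * h s) • g s)) (duhamel h u₀ u₁ g) (Icc 0 τ) := by
    intro t ht
    have hht := hh.of_mem_Icc ht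
    have hkernel : ∀ s, ((t - s) * h s) • g s = t • ((1 * h s) • g s) - (s * h s) • g s :=
      fun s => by rw [smul_smul, ← sub_smul]; ring_nf
    simp only [duhamel, hkernel]
    rw [intervalIntegral.integral_sub, intervalIntegral.integral_smul]
    · exact (intervalIntegrable_mul_smul hht continuous_const hg).smul t
    · exact intervalIntegrable_mul_smul hht continuous_id hg
  refine ContinuousOn.congr ?_ hsplit.symm
  exact (continuousOn_const.add (continuousOn_id.smul continuousOn_const)).add
    ((continuousOn_id.smul (hprim _ continuous_const)).sub (hprim _ continuous_id))

theorem norm_integral_mul_smul_le (hh : IntervalIntegrable h volume 0 τ) {C : ℝ}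
    (hC : ∀ s ∈ Icc 0 τ, ‖g s‖ ≤ C) (ht : t ∈ Icc 0 τ) :
    ‖∫ s in (0 : ℝ)..t, ((t - s) * h s) • g s‖ ≤ τ * C * ∫ s in (0 : ℝ)..τ, |h s| := by
  have hτ : 0 ≤ τ := ht.1.trans ht.2
  have hC₀ : 0 ≤ C := (norm_nonneg _).trans (hC 0 ⟨le_rfl, hτ⟩)
  calc ‖∫ s in (0 : ℝ)..t, ((t - s) * h s) • g s‖ ≤ ∫ s in (0 : ℝ)..t, τ * C * |h s| := by
        refine intervalIntegral.norm_integral_le_of_norm_le ht.1 (.of_forall fun s hs => ?_)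
          ((hh.of_mem_Icc ht).abs.const_mul _)
        rw [norm_smul, norm_mul, Real.norm_eq_abs, Real.norm_eq_abs,
          abs_of_nonneg (sub_nonneg.2 hs.2)]
        calc (t - s) * |h s| * ‖g s‖ ≤ τ * |h s| * C := by
              have hts : t - s ≤ τ := by linarith [hs.1, ht.2]
              have hgs := hC s ⟨hs.1.le, hs.2.trans ht.2⟩
              gcongr
          _ = τ * C * |h s| := by ring
    _ = τ * C * ∫ s in (0 : ℝ)..t, |h s| := intervalIntegral.integral_const_mul _ _
    _ ≤ τ * C * ∫ s in (0 : ℝ)..τ, |h s| := by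
        refine mul_le_mul_of_nonneg_left ?_ (mul_nonneg hτ hC₀)
        exact intervalIntegral.integral_mono_interval le_rfl ht.1 ht.2
          (.of_forall fun _ => abs_nonneg _) hh.abs

theorem norm_duhamel_le (hh : IntervalIntegrable h volume 0 τ) (u₀ u₁ : E) {M : ℝ}
    (hM : ∀ s ∈ Icc 0 τ, ‖g s‖ ≤ M) (ht : t ∈ Icc 0 τ) :
    ‖duhamel h u₀ u₁ g t‖ ≤ ‖u₀‖ + τ * ‖u₁‖ + τ * M * ∫ s in (0 : ℝ)..τ, |h s| := by
  have ht₁ : ‖t • u₁‖ ≤ τ * ‖u₁‖ := by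
    rw [norm_smul, Real.norm_of_nonneg ht.1]
    gcongr
    exact ht.2
  exact (norm_add₃_le ..).trans
    (add_le_add (add_le_add le_rfl ht₁) (norm_integral_mul_smul_le hh hM ht))

theorem norm_duhamel_sub_duhamel_le (hh : IntervalIntegrable h volume 0 τ) (hg : Continuous g)
    (hg' : Continuous g') (u₀ u₁ : E) {D : ℝ} (hD : ∀ s ∈ Icc 0 τ, ‖g s - g' s‖ ≤ D)
    (ht : t ∈ Icc 0 τ) :
    ‖duhamel h u₀ u₁ g t - duhamel h u₀ u₁ g' t‖ ≤ τ * D * ∫ s in (0 : ℝ)..τ, |h s| := by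
  have hc : Continuous fun s => t - s := by fun_prop
  have hht := hh.of_mem_Icc ht
  have hdiff : duhamel h u₀ u₁ g t - duhamel h u₀ u₁ g' t =
      ∫ s in (0 : ℝ)..t, ((t - s) * h s) • (g s - g' s) := by
    simp only [duhamel, smul_sub]
    rw [intervalIntegral.integral_sub (intervalIntegrable_mul_smul hht hc hg)
      (intervalIntegrable_mul_smul hht hc hg')]
    abel
  rw [hdiff]
  exact norm_integral_mul_smul_le hh hD ht

theorem exists_eq_duhamel_of_small [CompleteSpace E] (hh : IntervalIntegrable h volume 0 τ)
    (hτ : 0 ≤ τ) (u₀ u₁ : E) {F : E → E} {R : ℝ≥0} {K : ℝ≥0}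
    (hF : LipschitzOnWith K F (closedBall 0 R)) {M : ℝ} (hM : ∀ v ∈ closedBall (0 : E) R, ‖F v‖ ≤ M)
    (hR : ‖u₀‖ + τ * ‖u₁‖ + τ * M * ∫ s in (0 : ℝ)..τ, |h s| ≤ R)
    (hK : τ * K * ∫ s in (0 : ℝ)..τ, |h s| < 1) :
    ∃ u : ℝ → E, ContinuousOn u (Icc 0 τ) ∧ ∀ t ∈ Icc 0 τ, u t = duhamel h u₀ u₁ (F ∘ u) t := by
  set η := ∫ s in (0 : ℝ)..τ, |h s|
  have hη : 0 ≤ η := intervalIntegral.integral_nonneg hτ fun _ _ => abs_nonneg _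
  set S := closedBall (0 : C(Icc 0 τ, E)) R
  have hext : ∀ f ∈ S, ∀ s, IccExtend hτ f s ∈ closedBall (0 : E) R := fun f hf s =>
    mem_closedBall_zero_iff.2 ((f.norm_coe_le_norm _).trans (mem_closedBall_zero_iff.1 hf))
  have hcont : ∀ f ∈ S, Continuous (F ∘ IccExtend hτ f) := fun f hf =>
    hF.continuousOn.comp_continuous f.continuous.Icc_extend' (hext f hf)
  have : Nonempty (Icc 0 τ) := ⟨⟨0, le_rfl, hτ⟩⟩
  let Φ : S → S := fun f => ⟨⟨(Icc 0 τ).domRestrict (duhamel h u₀ u₁ (F ∘ IccExtend hτ f)),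
    (continuousOn_duhamel hh (hcont f f.2) u₀ u₁).domRestrict⟩, by
      refine mem_closedBall_zero_iff.2 ((ContinuousMap.norm_le_of_nonempty _).2 fun t => ?_)
      exact (norm_duhamel_le hh u₀ u₁ (fun s _ => hM _ (hext f f.2 s)) t.2).trans hR⟩
  let c : ℝ≥0 := ⟨τ * K * η, by positivity⟩
  have hΦ : ContractingWith c Φ := by
    refine ⟨hK, LipschitzWith.of_dist_le_mul fun f g => ?_⟩
    rw [Subtype.dist_eq, Subtype.dist_eq]
    refine (ContinuousMap.dist_le (mul_nonneg c.2 dist_nonneg)).2 fun t => ?_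
    rw [dist_eq_norm]
    refine (norm_duhamel_sub_duhamel_le hh (hcont f f.2) (hcont g g.2) u₀ u₁
      (D := K * dist (f : C(Icc 0 τ, E)) g) (fun s _ => ?_) t.2).trans_eq (by simp only [c]; ring)
    rw [← dist_eq_norm]
    exact (hF.dist_le_mul _ (hext f f.2 s) _ (hext g g.2 s)).trans
      (mul_le_mul_of_nonneg_left (ContinuousMap.dist_apply_le_dist _) K.2)
  have : CompleteSpace S := isClosed_closedBall.completeSpace_coe
  have : Nonempty S := ⟨⟨0, mem_closedBall_self R.2⟩⟩
  set f := ContractingWith.fixedPoint Φ hΦ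
  refine ⟨IccExtend hτ f, f.1.continuous.Icc_extend'.continuousOn, fun t ht => ?_⟩
  have hfix : Φ f = f := hΦ.fixedPoint_isFixedPt
  calc IccExtend hτ f t = (f : C(Icc 0 τ, E)) ⟨t, ht⟩ := IccExtend_of_mem hτ _ ht
    _ = (Φ f : C(Icc 0 τ, E)) ⟨t, ht⟩ := by rw [hfix]
    _ = duhamel h u₀ u₁ (F ∘ IccExtend hτ f) t := rfl

theorem exists_eq_duhamel [CompleteSpace E] {T : ℝ} (hT : 0 < T)
    (hh : IntervalIntegrable h volume 0 T) (u₀ u₁ : E) {F : E → E}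
    (hF : ∀ R : ℝ≥0, ∃ K, LipschitzOnWith K F (closedBall 0 R)) :
    ∃ τ ∈ Ioc 0 T, ∃ u : ℝ → E, ContinuousOn u (Icc 0 τ) ∧
      ∀ t ∈ Icc 0 τ, u t = duhamel h u₀ u₁ (F ∘ u) t := by
  let R : ℝ≥0 := ⟨‖u₀‖ + T * ‖u₁‖ + 1, by positivity⟩
  obtain ⟨K, hK⟩ := hF R
  set M := ‖F 0‖ + K * R
  have hM : ∀ v ∈ closedBall (0 : E) R, ‖F v‖ ≤ M := fun v hv => by
    have hFv := hK.dist_le_mul v hv 0 (mem_closedBall_self R.2)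
    rw [dist_eq_norm, dist_zero_right] at hFv
    have hKv : (K : ℝ) * ‖v‖ ≤ K * R := by gcongr; exact mem_closedBall_zero_iff.1 hv
    linarith [norm_le_insert' (F v) (F 0)]
  have h0 : Tendsto (fun τ => T * (M + K) * ∫ s in (0 : ℝ)..τ, |h s|) (𝓝[Ioc 0 T] 0) (𝓝 0) := by
    have := (intervalIntegral.continuousWithinAt_primitive (a := 0) (b₁ := 0) (b₂ := T)
      (measure_singleton 0) (by simpa [hT.le] using hh.abs)).mono Ioc_subset_Icc_self
    simpa using (this.tendsto.const_mul (T * (M + K)))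
  have := left_nhdsWithin_Ioc_neBot hT
  obtain ⟨τ, hsmall, hτ⟩ := ((h0.eventually (gt_mem_nhds one_pos)).and self_mem_nhdsWithin).exists
  set η := ∫ s in (0 : ℝ)..τ, |h s|
  have hη : 0 ≤ η := intervalIntegral.integral_nonneg hτ.1.le fun _ _ => abs_nonneg _
  have hM₀ : 0 ≤ M := by positivity
  have hu₁ : τ * ‖u₁‖ ≤ T * ‖u₁‖ := by gcongr; exact hτ.2
  have hMη : τ * M * η ≤ T * (M + K) * η := by gcongr; exacts [hτ.2, le_add_of_nonneg_right K.2]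
  have hKη : τ * K * η ≤ T * (M + K) * η := by gcongr; exacts [hτ.2, le_add_of_nonneg_left hM₀]
  obtain ⟨u, hu, hueq⟩ := exists_eq_duhamel_of_small (hh.of_mem_Icc (Ioc_subset_Icc_self hτ))
    hτ.1.le u₀ u₁ hK hM (by change _ ≤ ‖u₀‖ + T * ‖u₁‖ + 1; linarith) (by linarith)
  exact ⟨τ, hτ, u, hu, hueq⟩

end Duhamel

theorem stmt16_general (d : ℕ) (p : ℕ) (hp : 2 ≤ p)
    [Fact ((1 : ℝ≥0∞) ≤ 2 * p)]
    (u₀ u₁ : Lp ℝ 2 (volume : Measure (EuclideanSpace ℝ (Fin d))))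
    (T : ℝ) (hT : 0 < T)
    (h : ℝ → ℝ) (hmeas : Measurable h)
    (hL2 : IntegrableOn (fun s => h s ^ 2) (Set.Ioc (0 : ℝ) T))
    (A : Lp ℝ 2 (volume : Measure (EuclideanSpace ℝ (Fin d))) →L[ℝ]
         Lp ℝ (2 * p) (volume : Measure (EuclideanSpace ℝ (Fin d))))
    -- `N w` realizes `|w|^p` as an element of `L²(ℝ^d)`
    (N : Lp ℝ (2 * p) (volume : Measure (EuclideanSpace ℝ (Fin d))) →
         Lp ℝ 2 (volume : Measure (EuclideanSpace ℝ (Fin d))))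
    (hN : ∀ w, (N w : EuclideanSpace ℝ (Fin d) → ℝ) =ᵐ[volume] fun x => |w x| ^ p) :
    ∃ Tstar ∈ Set.Ioc (0 : ℝ) T,
      ∃ u : ℝ → Lp ℝ 2 (volume : Measure (EuclideanSpace ℝ (Fin d))),
        ContinuousOn u (Set.Icc 0 Tstar) ∧
        ∀ t ∈ Set.Icc (0 : ℝ) Tstar,
          u t = u₀ + t • u₁ + ∫ s in (0 : ℝ)..t, ((t - s) * h s) • N (A (u s)) := by
  have hh : IntervalIntegrable h volume 0 T := by
    rw [intervalIntegrable_iff_integrableOn_Ioc_of_le hT.le]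
    exact ((memLp_two_iff_integrable_sq hmeas.aestronglyMeasurable).2 hL2).integrable one_le_two
  have hF : ∀ R : ℝ≥0, ∃ K, LipschitzOnWith K (fun v => N (A v)) (closedBall 0 R) := fun R =>
    ⟨_, (Lp.lipschitzOnWith_of_ae_eq_abs_pow hp hN (‖A‖₊ * R)).comp A.lipschitz.lipschitzOnWith
      (by simpa using A.lipschitz.mapsTo_closedBall 0 R)⟩
  exact exists_eq_duhamel hT hh u₀ u₁ hF

theorem stmt16 (d : ℕ) (hd : 1 ≤ d) (p : ℕ) (hp : 2 ≤ p)
    [Fact ((1 : ℝ≥0∞) ≤ 2 * p)]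
    (u₀ u₁ : Lp ℝ 2 (volume : Measure (EuclideanSpace ℝ (Fin d))))
    (T : ℝ) (hT : 0 < T)
    (h : ℝ → ℝ) (hmeas : Measurable h)
    (hpos : ∀ s ∈ Set.Ioc (0 : ℝ) T, 0 < h s)
    (hL2 : IntegrableOn (fun s => h s ^ 2) (Set.Ioc (0 : ℝ) T))
    (A : Lp ℝ 2 (volume : Measure (EuclideanSpace ℝ (Fin d))) →L[ℝ]
         Lp ℝ (2 * p) (volume : Measure (EuclideanSpace ℝ (Fin d))))
    -- `N w` realizes `|w|^p` as an element of `L²(ℝ^d)`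
    (N : Lp ℝ (2 * p) (volume : Measure (EuclideanSpace ℝ (Fin d))) →
         Lp ℝ 2 (volume : Measure (EuclideanSpace ℝ (Fin d))))
    (hN : ∀ w, (N w : EuclideanSpace ℝ (Fin d) → ℝ) =ᵐ[volume] fun x => |w x| ^ p) :
    ∃ Tstar ∈ Set.Ioc (0 : ℝ) T,
      ∃ u : ℝ → Lp ℝ 2 (volume : Measure (EuclideanSpace ℝ (Fin d))),
        ContinuousOn u (Set.Icc 0 Tstar) ∧
        ∀ t ∈ Set.Icc (0 : ℝ) Tstar,
          u t = u₀ + t • u₁ + ∫ s in (0 : ℝ)..t, ((t - s) * h s) • N (A (u s)) :=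
  stmt16_general d p hp u₀ u₁ T hT h hmeas hL2 A N hN
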